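/- Let L be a finite multiset of real numbers with |L| = N ≥ 2 and let ε ∈ (0,1). Then there exists a function f : ℝ → ℝ such that x ≤ f(x) for every element x of L, the image multiset L.map(f) (obtained by applying f to every element of L, preserving multiplicities) is an ε-sketch of L, and L.map(f) has at most ⌈8/ε⌉ + ⌈8·ln(N)/ε⌉ + 8 distinct elements. -/

import Mathlib

/-!
Call `cntLT L y` the rank of `y`. The checkpoints `c₀ = 0`, `c_{t+1} = c_t + 1 + ⌊ε c_t⌋` are
spaced as widely as `(1 - ε) c_{t+1} ≤ c_t + 1` allows, so they grow like `(1 + ε)^t` and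
`O(log N / ε)` of them reach `N`. Round each `x ∈ L` up to the largest element of `L` whose rank is
at most the first checkpoint at or above the rank of `x`; the image then takes one value per
checkpoint. Rounding up can only lower the counts `cnt_{<λ}`. Conversely, if `k = cnt_{<λ}(L) > 0`
and `p` is the last checkpoint below `k`, then every element of rank at most `p` is rounded to an
element of rank at most `p`, hence below `λ`; there are at least `p + 1 ≥ (1 - ε) k` of them.
-/

/-- The number of elements of the multiset `L` smaller than `lam`, with multiplicity. -/
noncomputable def cntLT (L : Multiset ℝ) (lam : ℝ) : ℕ := (L.filter (fun x => x < lam)).card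

/-- `S` is an `eps`-sketch of `L`: for every threshold `lam`,
`(1 - eps)·cnt_{<lam}(L) ≤ cnt_{<lam}(S) ≤ cnt_{<lam}(L)`. -/
def IsSketch (eps : ℝ) (S L : Multiset ℝ) : Prop :=
  ∀ lam : ℝ,
    (1 - eps) * (cntLT L lam : ℝ) ≤ (cntLT S lam : ℝ) ∧
    (cntLT S lam : ℝ) ≤ (cntLT L lam : ℝ)

noncomputable def ckpt (eps : ℝ) : ℕ → ℕ
  | 0 => 0
  | t + 1 => ckpt eps t + 1 + ⌊eps * ckpt eps t⌋₊

section Checkpoints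

variable {eps : ℝ}

lemma le_ckpt (t : ℕ) : t ≤ ckpt eps t := by
  induction t with
  | zero => exact le_rfl
  | succ t ih => rw [ckpt]; omega

lemma ckpt_mono : Monotone (ckpt eps) :=
  monotone_nat_of_le_succ fun t => by rw [ckpt]; omega

lemma one_add_pow_le_ckpt (heps : 0 ≤ eps) (t : ℕ) : (1 + eps) ^ t ≤ (ckpt eps (t + 1) : ℝ) := by
  induction t with
  | zero => simp [ckpt]
  | succ t ih =>
    have hfloor : eps * ckpt eps (t + 1) - 1 < ⌊eps * ckpt eps (t + 1)⌋₊ := Nat.sub_one_lt_floor _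
    have hstep : (ckpt eps (t + 2) : ℝ) = ckpt eps (t + 1) + 1 + ⌊eps * ckpt eps (t + 1)⌋₊ := by
      rw [ckpt]; push_cast; ring
    calc (1 + eps) ^ (t + 1) = (1 + eps) ^ t * (1 + eps) := pow_succ _ _
      _ ≤ ckpt eps (t + 1) * (1 + eps) := by gcongr
      _ ≤ ckpt eps (t + 2) := by nlinarith

variable (eps) in
noncomputable def ckptIdx (i : ℕ) : ℕ := Nat.find (p := fun t => i ≤ ckpt eps t) ⟨i, le_ckpt i⟩

lemma le_ckpt_ckptIdx (i : ℕ) : i ≤ ckpt eps (ckptIdx eps i) :=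
  Nat.find_spec (p := fun t => i ≤ ckpt eps t) _

lemma ckptIdx_le {i t : ℕ} (h : i ≤ ckpt eps t) : ckptIdx eps i ≤ t := Nat.find_min' _ h

lemma ckptIdx_mono : Monotone (ckptIdx eps) :=
  fun _ _ hij => ckptIdx_le (hij.trans (le_ckpt_ckptIdx _))

lemma ckptIdx_le_of_le_one_add_pow (heps : 0 ≤ eps) {n B : ℕ} (h : (n : ℝ) ≤ (1 + eps) ^ B) :
    ckptIdx eps n ≤ B + 1 :=
  ckptIdx_le (by exact_mod_cast h.trans (one_add_pow_le_ckpt heps B))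

lemma exists_ckpt_lt (heps : 0 ≤ eps) {k : ℕ} (hk : 0 < k) :
    ∃ p < k, (1 - eps) * k ≤ p + 1 ∧ ∀ i ≤ p, ckpt eps (ckptIdx eps i) ≤ p := by
  obtain ⟨t, ht⟩ : ∃ t, ckptIdx eps k = t + 1 :=
    Nat.exists_eq_add_one.mpr <| Nat.pos_of_ne_zero fun h0 => by
      have := le_ckpt_ckptIdx (eps := eps) k
      rw [h0, ckpt] at this
      omega
  have hprev : ckpt eps t < k := Nat.lt_of_not_le fun h => by
    have := ckptIdx_le h
    omega
  have hnext : k ≤ ckpt eps t + 1 + ⌊eps * ckpt eps t⌋₊ := by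
    have := le_ckpt_ckptIdx (eps := eps) k
    rwa [ht, ckpt] at this
  refine ⟨ckpt eps t, hprev, ?_, fun i hi => ckpt_mono ?_⟩
  · have hfloor : (⌊eps * ckpt eps t⌋₊ : ℝ) ≤ eps * ckpt eps t := Nat.floor_le (by positivity)
    have hkR : (k : ℝ) ≤ ckpt eps t + 1 + ⌊eps * ckpt eps t⌋₊ := by exact_mod_cast hnext
    have hpk : (ckpt eps t : ℝ) ≤ k := by exact_mod_cast hprev.le
    nlinarith
  · have := ckptIdx_le hi
    omega

end Checkpoints

lemma natCast_le_one_add_pow_ceil {eps : ℝ} (heps0 : 0 < eps) (heps1 : eps ≤ 1) (n : ℕ) :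
    (n : ℝ) ≤ (1 + eps) ^ ⌈2 * Real.log n / eps⌉₊ := by
  set B := ⌈2 * Real.log n / eps⌉₊
  have hlog : eps / 2 ≤ Real.log (1 + eps) := by
    refine le_trans ?_ (Real.le_log_one_add_of_nonneg heps0.le)
    rw [div_le_div_iff₀ two_pos (by linarith)]
    nlinarith
  have hB : 2 * Real.log n / eps ≤ B := Nat.le_ceil _
  rw [div_le_iff₀ heps0] at hB
  calc (n : ℝ) ≤ Real.exp (Real.log n) := Real.le_exp_log _
    _ ≤ Real.exp (B * Real.log (1 + eps)) := by
        gcongr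
        nlinarith [B.cast_nonneg (α := ℝ)]
    _ = (1 + eps) ^ B := by rw [← Real.log_pow, Real.exp_log (by positivity)]

lemma Multiset.card_filter_le_of_imp {α : Type*} {s : Multiset α} {p q : α → Prop}
    [DecidablePred p] [DecidablePred q] (h : ∀ x ∈ s, p x → q x) :
    card (s.filter p) ≤ card (s.filter q) := by
  refine card_le_card (le_filter.2 ⟨filter_le _ _, fun x hx => ?_⟩)
  obtain ⟨hxs, hpx⟩ := mem_filter.1 hx
  exact h x hxs hpx

section Rank

variable {L : Multiset ℝ}

lemma cntLT_mono : Monotone (cntLT L) := fun _ _ h =>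
  Multiset.card_le_card <| Multiset.monotone_filter_right _ fun _ hx => hx.trans_le h

lemma cntLT_le_card (lam : ℝ) : cntLT L lam ≤ Multiset.card L :=
  Multiset.card_le_card (Multiset.filter_le _ _)

lemma lt_of_cntLT_lt {y lam : ℝ} (h : cntLT L y < cntLT L lam) : y < lam :=
  lt_of_not_ge fun hle => h.not_ge (cntLT_mono hle)

lemma cntLT_map (f : ℝ → ℝ) (lam : ℝ) :
    cntLT (L.map f) lam = Multiset.card (L.filter fun x => f x < lam) := by
  rw [cntLT, Multiset.filter_map, Multiset.card_map]
  rfl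

lemma cntLT_map_le {f : ℝ → ℝ} (hf : ∀ x ∈ L, x ≤ f x) (lam : ℝ) :
    cntLT (L.map f) lam ≤ cntLT L lam := by
  rw [cntLT_map]
  exact Multiset.card_filter_le_of_imp fun x hx hfx => (hf x hx).trans_lt hfx

/-- `cntLT L y` is the position of the first occurrence of `y` in the sorted list of `L`, so the
first `p + 1` entries of that list all have rank at most `p`. -/
lemma lt_card_filter_cntLT_le {p : ℕ} (hp : p < Multiset.card L) :
    p < Multiset.card (L.filter fun x => cntLT L x ≤ p) := by
  set l := L.sort (· ≤ ·)
  have hsorted : l.Pairwise (· ≤ ·) := Multiset.pairwise_sort _ _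
  have hcard : ∀ (q : ℝ → Prop) [DecidablePred q], Multiset.card (L.filter q) = l.countP q :=
    fun q _ => by rw [← Multiset.countP_eq_card_filter, ← Multiset.coe_countP, Multiset.sort_eq]
  have hrank : ∀ j (hj : j < l.length), cntLT L l[j] ≤ j := fun j hj => by
    have hdrop : ∀ x ∈ l.drop j, l[j] ≤ x := by
      have hd := hsorted.drop (i := j)
      rw [List.drop_eq_getElem_cons hj, List.pairwise_cons] at hd
      rw [List.drop_eq_getElem_cons hj]
      exact List.forall_mem_cons.2 ⟨le_rfl, hd.1⟩
    calc cntLT L l[j]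
        = (l.take j).countP (fun x => x < l[j]) + (l.drop j).countP (fun x => x < l[j]) := by
          rw [cntLT, hcard, ← List.countP_append, List.take_append_drop]
      _ = (l.take j).countP (fun x => x < l[j]) := by
          rw [List.countP_eq_zero (l := l.drop j).2 fun x hx => by simpa using hdrop x hx, add_zero]
      _ ≤ j := List.countP_le_length.trans (List.length_take_le _ _)
  have hlen : (l.take (p + 1)).length = p + 1 := by
    rw [List.length_take, Multiset.length_sort]
    omega
  calc p < (l.take (p + 1)).countP (fun x => cntLT L x ≤ p) := by
        rw [List.countP_eq_length.2 fun x hx => ?_, hlen]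
        · omega
        obtain ⟨i, hi, rfl⟩ := List.mem_iff_getElem.1 hx
        rw [List.getElem_take, decide_eq_true_eq]
        exact (hrank i _).trans (by omega)
    _ ≤ l.countP (fun x => cntLT L x ≤ p) := (List.take_sublist _ _).countP_le
    _ = Multiset.card (L.filter fun x => cntLT L x ≤ p) := (hcard _).symm

end Rank

lemma finite_setOf_mem_cntLT_le (L : Multiset ℝ) (c : ℕ) : {y | y ∈ L ∧ cntLT L y ≤ c}.Finite :=
  L.toFinset.finite_toSet.subset fun _ hy => Multiset.mem_toFinset.2 hy.1

/-- `cntLT L y` is the rank of `y` in `L`. The set is nonempty wherever this is used (it contains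
the point being rounded), so the junk value `sSup ∅ = 0` never arises. -/
noncomputable def maxOfRankLE (L : Multiset ℝ) (c : ℕ) : ℝ := sSup {y | y ∈ L ∧ cntLT L y ≤ c}

noncomputable def sketchMap (eps : ℝ) (L : Multiset ℝ) (x : ℝ) : ℝ :=
  maxOfRankLE L (ckpt eps (ckptIdx eps (cntLT L x)))

section Sketch

variable {L : Multiset ℝ} {x : ℝ} {c : ℕ}

lemma le_maxOfRankLE (hx : x ∈ L) (hc : cntLT L x ≤ c) : x ≤ maxOfRankLE L c :=
  le_csSup (finite_setOf_mem_cntLT_le L c).bddAbove ⟨hx, hc⟩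

lemma maxOfRankLE_lt (hx : x ∈ L) (hc : cntLT L x ≤ c) {lam : ℝ} (hlam : c < cntLT L lam) :
    maxOfRankLE L c < lam :=
  ((finite_setOf_mem_cntLT_le L c).csSup_lt_iff ⟨x, hx, hc⟩).2 fun _ hy =>
    lt_of_cntLT_lt (hy.2.trans_lt hlam)

variable {eps : ℝ}

lemma le_sketchMap (hx : x ∈ L) : x ≤ sketchMap eps L x :=
  le_maxOfRankLE hx (le_ckpt_ckptIdx _)

lemma cntLT_map_sketchMap_ge (heps : 0 ≤ eps) (lam : ℝ) :
    (1 - eps) * cntLT L lam ≤ cntLT (L.map (sketchMap eps L)) lam := by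
  rcases (cntLT L lam).eq_zero_or_pos with hk | hk
  · simp [hk]
  obtain ⟨p, hpk, happrox, hround⟩ := exists_ckpt_lt heps hk
  have hp : p < cntLT (L.map (sketchMap eps L)) lam := by
    refine (lt_card_filter_cntLT_le (hpk.trans_le (cntLT_le_card lam))).trans_le ?_
    rw [cntLT_map]
    exact Multiset.card_filter_le_of_imp fun y hy hry =>
      maxOfRankLE_lt hy (le_ckpt_ckptIdx _) ((hround _ hry).trans_lt hpk)
  calc (1 - eps) * cntLT L lam ≤ p + 1 := happrox
    _ ≤ cntLT (L.map (sketchMap eps L)) lam := by exact_mod_cast hp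

lemma isSketch_map_sketchMap (heps : 0 ≤ eps) : IsSketch eps (L.map (sketchMap eps L)) L :=
  fun lam => ⟨cntLT_map_sketchMap_ge heps lam,
    by exact_mod_cast cntLT_map_le (fun _ => le_sketchMap) lam⟩

lemma card_toFinset_map_sketchMap_le :
    (L.map (sketchMap eps L)).toFinset.card ≤ ckptIdx eps (Multiset.card L) + 1 := by
  have hsub : (L.map (sketchMap eps L)).toFinset ⊆
      (Finset.range (ckptIdx eps (Multiset.card L) + 1)).image
        fun t => maxOfRankLE L (ckpt eps t) := by
    intro y hy
    obtain ⟨x, -, rfl⟩ := Multiset.mem_map.1 (Multiset.mem_toFinset.1 hy)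
    exact Finset.mem_image.2 ⟨_, Finset.mem_range.2 <| Nat.lt_succ_of_le <|
      ckptIdx_mono (cntLT_le_card x), rfl⟩
  exact (Finset.card_le_card hsub).trans (Finset.card_image_le.trans (Finset.card_range _).le)

end Sketch

theorem stmt14_general (L : Multiset ℝ) (N : ℕ) (hcard : Multiset.card L = N)
    (eps : ℝ) (heps0 : 0 < eps) (heps1 : eps < 1) :
    ∃ f : ℝ → ℝ, (∀ x ∈ L, x ≤ f x) ∧ IsSketch eps (L.map f) L ∧
      (L.map f).toFinset.card ≤ ⌈(8 : ℝ) / eps⌉₊ + ⌈8 * Real.log N / eps⌉₊ + 8 := by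
  refine ⟨sketchMap eps L, fun _ => le_sketchMap, isSketch_map_sketchMap heps0.le, ?_⟩
  have hidx : ckptIdx eps N ≤ ⌈2 * Real.log N / eps⌉₊ + 1 :=
    ckptIdx_le_of_le_one_add_pow heps0.le (natCast_le_one_add_pow_ceil heps0 heps1.le N)
  have hceil : ⌈2 * Real.log N / eps⌉₊ ≤ ⌈8 * Real.log N / eps⌉₊ := by
    gcongr
    linarith [Real.log_natCast_nonneg N]
  calc (L.map (sketchMap eps L)).toFinset.card ≤ ckptIdx eps N + 1 :=
        hcard ▸ card_toFinset_map_sketchMap_le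
    _ ≤ ⌈(8 : ℝ) / eps⌉₊ + ⌈8 * Real.log N / eps⌉₊ + 8 := by omega

theorem stmt14 (L : Multiset ℝ) (N : ℕ) (hN : 2 ≤ N) (hcard : Multiset.card L = N)
    (eps : ℝ) (heps0 : 0 < eps) (heps1 : eps < 1) :
    ∃ f : ℝ → ℝ, (∀ x ∈ L, x ≤ f x) ∧ IsSketch eps (L.map f) L ∧
      (L.map f).toFinset.card ≤ ⌈(8 : ℝ) / eps⌉₊ + ⌈8 * Real.log N / eps⌉₊ + 8 :=
  stmt14_general L N hcard eps heps0 heps1
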